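/- arXiv:1901.05698 — 6 statements merged into one kernel-verified Lean document; each statement's English description precedes it below -/
import Mathlib

section
/- Let μ be a probability measure on [0,∞) with cumulative distribution function F_μ, Williamson transform G_μ and Ψ(s) = (1 − s^α)₊. Fix x > 0 and define the measure κ_x(A) = ∫_{[0,∞)} (δ_x ▵_α δ_y)(A) μ(dy). Then for every t ≥ x, κ_x((0,t]) = Ψ(x/t) F_μ(t) + (1 − Ψ(x/t)) G_μ(t), and for every 0 < t < x, κ_x((0,t]) = 0. -/
/-!
Given `y ≥ 0`, the mass `(δ_x ▵_α δ_y)((0,t])` vanishes for `t < max(x,y)`, while for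
`t ≥ max(x,y)` the Pareto tail `u^{-2α}` makes it `1 - (xy/t²)^α`. Writing
`1 - (x/t)^α (y/t)^α = Ψ(x/t) + (1 - Ψ(x/t)) Ψ(y/t)` for `y ≤ t` and integrating in `y` produces
`Ψ(x/t) F_μ(t) + (1 - Ψ(x/t)) G_μ(t)`.
-/

open MeasureTheory Filter Real Topology

/-- The Pareto probability measure on [1,∞) with density 2α u^{−2α−1}. -/
noncomputable def pareto (α : ℝ) : Measure ℝ :=
  (volume.restrict (Set.Ici 1)).withDensity fun u => ENNReal.ofReal (2 * α * u ^ (-2 * α - 1))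

/-- The Kendall convolution δ_x ▵_α δ_y of two point masses: the pushforward under
u ↦ M·u of ρ·π_{2α} + (1−ρ)·δ_1, where M = max(x,y), m = min(x,y), ρ = (m/M)^α. -/
noncomputable def kendall (α x y : ℝ) : Measure ℝ :=
  Measure.map (fun u => max x y * u)
    (ENNReal.ofReal ((min x y / max x y) ^ α) • pareto α +
      ENNReal.ofReal (1 - (min x y / max x y) ^ α) • Measure.dirac 1)

open Set

section Pareto

variable {α s : ℝ}

theorem pareto_Ioc_of_lt_one (hs : s < 1) : pareto α (Ioc 0 s) = 0 := by
  have hdisj : Ioc 0 s ∩ Ici 1 = ∅ :=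
    eq_empty_of_forall_notMem fun u ⟨⟨_, hus⟩, hu⟩ => (hus.trans_lt hs).not_ge hu
  rw [pareto, withDensity_apply _ measurableSet_Ioc, Measure.restrict_restrict measurableSet_Ioc,
    hdisj, Measure.restrict_empty, lintegral_zero_measure]

theorem pareto_Ioc (hα : 0 < α) (hs : 1 ≤ s) :
    pareto α (Ioc 0 s) = ENNReal.ofReal (1 - s ^ (-(2 * α))) := by
  have hset : Ioc 0 s ∩ Ici 1 = Icc 1 s :=
    ext fun u => ⟨fun ⟨⟨_, hus⟩, hu⟩ => ⟨hu, hus⟩,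
      fun ⟨hu, hus⟩ => ⟨⟨one_pos.trans_le hu, hus⟩, hu⟩⟩
  have h0 : (0 : ℝ) ∉ uIcc 1 s := by
    rw [uIcc_of_le hs]; exact fun h => zero_lt_one.not_ge h.1
  have hint : IntegrableOn (fun u : ℝ => 2 * α * u ^ (-2 * α - 1)) (Ioc 1 s) :=
    (intervalIntegrable_iff_integrableOn_Ioc_of_le hs).1
      ((intervalIntegral.intervalIntegrable_rpow (Or.inr h0)).const_mul _)
  have hnonneg : 0 ≤ᵐ[volume.restrict (Ioc 1 s)] fun u : ℝ => 2 * α * u ^ (-2 * α - 1) := by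
    filter_upwards [ae_restrict_mem measurableSet_Ioc] with u hu
    have : 0 ≤ u := zero_le_one.trans hu.1.le
    positivity
  rw [pareto, withDensity_apply _ measurableSet_Ioc, Measure.restrict_restrict measurableSet_Ioc,
    hset, Measure.restrict_congr_set Ioc_ae_eq_Icc.symm,
    ← ofReal_integral_eq_lintegral_ofReal hint hnonneg, ← intervalIntegral.integral_of_le hs,
    intervalIntegral.integral_const_mul, integral_rpow (Or.inr ⟨by linarith, h0⟩),
    show -2 * α - 1 + 1 = -(2 * α) by ring, one_rpow]
  congr 1
  field_simp
  ring

end Pareto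

section Kendall

variable {α x y t : ℝ}

theorem kendall_apply_Ioc (hM : 0 < max x y) :
    kendall α x y (Ioc 0 t) =
      ENNReal.ofReal ((min x y / max x y) ^ α) * pareto α (Ioc 0 (t / max x y)) +
      ENNReal.ofReal (1 - (min x y / max x y) ^ α) * Measure.dirac 1 (Ioc 0 (t / max x y)) := by
  rw [kendall, Measure.map_apply (measurable_const_mul _) measurableSet_Ioc,
    preimage_const_mul_Ioc₀ _ _ hM, zero_div]
  rfl

theorem kendall_apply_Ioc_of_lt_max (ht : t < max x y) : kendall α x y (Ioc 0 t) = 0 := by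
  rcases le_or_gt t 0 with ht0 | ht0
  · rw [Ioc_eq_empty ht0.not_gt, measure_empty]
  have hM : 0 < max x y := ht0.trans ht
  have hs : t / max x y < 1 := (div_lt_one hM).2 ht
  rw [kendall_apply_Ioc hM, pareto_Ioc_of_lt_one hs,
    Measure.dirac_apply, indicator_of_notMem fun h => hs.not_ge h.2]
  simp

/-- The rescaled Pareto tail `(t / M) ^ (-2α)` weighted by `(m / M) ^ α` only sees the product
`m M = x y`. -/
theorem kendall_apply_Ioc_of_max_le (hα : 0 < α) (hx : 0 < x) (hy : 0 ≤ y) (ht : max x y ≤ t) :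
    kendall α x y (Ioc 0 t) = ENNReal.ofReal (1 - (x * y / t ^ 2) ^ α) := by
  have hM : 0 < max x y := hx.trans_le (le_max_left _ _)
  have hm : 0 ≤ min x y := le_min hx.le hy
  have hs : 1 ≤ t / max x y := (one_le_div hM).2 ht
  set ρ := (min x y / max x y) ^ α with hρ
  have hρ_nonneg : 0 ≤ ρ := rpow_nonneg (div_nonneg hm hM.le) _
  have hρ_le_one : ρ ≤ 1 :=
    rpow_le_one (div_nonneg hm hM.le) ((div_le_one hM).2 min_le_max) hα.le
  have htail_le_one : (t / max x y) ^ (-(2 * α)) ≤ 1 :=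
    rpow_le_one_of_one_le_of_nonpos hs (by linarith)
  have hkey : ρ * (t / max x y) ^ (-(2 * α)) = (x * y / t ^ 2) ^ α := by
    have hs0 : 0 ≤ t / max x y := zero_le_one.trans hs
    rw [neg_mul_eq_neg_mul, rpow_mul hs0, rpow_neg hs0, rpow_two, hρ,
      ← mul_rpow (div_nonneg hm hM.le) (by positivity), ← min_mul_max x y]
    congr 1
    field_simp
  have hone : (1 : ℝ) ∈ Ioc 0 (t / max x y) := ⟨one_pos, hs⟩
  rw [kendall_apply_Ioc hM, pareto_Ioc hα hs, Measure.dirac_apply_of_mem hone, mul_one,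
    ← ENNReal.ofReal_mul hρ_nonneg, ← ENNReal.ofReal_add (by nlinarith) (by linarith)]
  congr 1
  linear_combination -hkey

end Kendall

/-- `Ψ(s) = (1 - s ^ α)₊`; the Williamson transform is `G_μ(t) = ∫ Ψ(w / t) dμ(w)`. -/
noncomputable def williamsonKernel (α s : ℝ) : ℝ := max (1 - s ^ α) 0

section WilliamsonKernel

variable {α s : ℝ}

theorem williamsonKernel_of_le_one (hα : 0 ≤ α) (hs₀ : 0 ≤ s) (hs₁ : s ≤ 1) :
    williamsonKernel α s = 1 - s ^ α :=
  max_eq_left (sub_nonneg.2 (rpow_le_one hs₀ hs₁ hα))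

theorem williamsonKernel_of_one_le (hα : 0 ≤ α) (hs : 1 ≤ s) : williamsonKernel α s = 0 :=
  max_eq_right (sub_nonpos.2 (one_le_rpow hs hα))

theorem williamsonKernel_nonneg : 0 ≤ williamsonKernel α s := le_max_right _ _

theorem williamsonKernel_le_one (hs : 0 ≤ s) : williamsonKernel α s ≤ 1 :=
  max_le (sub_le_self _ (rpow_nonneg hs _)) zero_le_one

theorem measurable_williamsonKernel : Measurable (williamsonKernel α) := by
  unfold williamsonKernel; fun_prop

end WilliamsonKernel

theorem integrable_williamsonKernel_div {μ : Measure ℝ} [IsFiniteMeasure μ]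
    (hμ : ∀ᵐ w ∂μ, 0 ≤ w) {α t : ℝ} (ht : 0 ≤ t) :
    Integrable (fun w => williamsonKernel α (w / t)) μ := by
  have hmeas : Measurable fun w => williamsonKernel α (w / t) :=
    measurable_williamsonKernel.comp (measurable_id.div_const t)
  refine .of_bound hmeas.aestronglyMeasurable 1 (hμ.mono fun w hw => ?_)
  rw [norm_of_nonneg williamsonKernel_nonneg]
  exact williamsonKernel_le_one (div_nonneg hw ht)

/-- For `y ≤ t` this is `1 - (x/t)^α (y/t)^α = Ψ(x/t) + (x/t)^α Ψ(y/t)`; for `y > t` both sides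
vanish. -/
theorem kendall_apply_Ioc_eq_ofReal {α x y t : ℝ} (hα : 0 < α) (hx : 0 < x) (hy : 0 ≤ y)
    (hxt : x ≤ t) :
    kendall α x y (Ioc 0 t) = ENNReal.ofReal (williamsonKernel α (x / t) * (Iic t).indicator 1 y
      + (1 - williamsonKernel α (x / t)) * williamsonKernel α (y / t)) := by
  have ht : 0 < t := hx.trans_le hxt
  have hxt' : x / t ≤ 1 := (div_le_one ht).2 hxt
  rcases le_or_gt y t with hyt | hyt
  · have hyt' : y / t ≤ 1 := (div_le_one ht).2 hyt
    have hprod : (x / t) ^ α * (y / t) ^ α = (x * y / t ^ 2) ^ α := by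
      rw [← mul_rpow (by positivity) (by positivity), div_mul_div_comm, sq]
    rw [kendall_apply_Ioc_of_max_le hα hx hy (max_le hxt hyt), indicator_of_mem (mem_Iic.2 hyt),
      williamsonKernel_of_le_one hα.le (by positivity) hxt',
      williamsonKernel_of_le_one hα.le (by positivity) hyt', Pi.one_apply]
    congr 1
    linear_combination hprod
  · rw [kendall_apply_Ioc_of_lt_max (hyt.trans_le (le_max_right _ _)),
      indicator_of_notMem (notMem_Iic.2 hyt),
      williamsonKernel_of_one_le hα.le ((one_le_div ht).2 hyt.le)]
    simp

theorem toReal_lintegral_kendall_apply_Ioc {μ : Measure ℝ} [IsFiniteMeasure μ]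
    (hμ : ∀ᵐ y ∂μ, 0 ≤ y) {α x t : ℝ} (hα : 0 < α) (hx : 0 < x) (hxt : x ≤ t) :
    (∫⁻ y, kendall α x y (Ioc 0 t) ∂μ).toReal = williamsonKernel α (x / t) * μ.real (Iic t)
      + (1 - williamsonKernel α (x / t)) * ∫ w, williamsonKernel α (w / t) ∂μ := by
  have ht : 0 < t := hx.trans_le hxt
  rw [lintegral_congr_ae (hμ.mono fun y hy => kendall_apply_Ioc_eq_ofReal hα hx hy hxt)]
  set c := williamsonKernel α (x / t)
  have hc : c ≤ 1 := williamsonKernel_le_one (by positivity)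
  have hind : Integrable (fun y => c * (Iic t).indicator 1 y) μ :=
    ((integrable_const 1).indicator measurableSet_Iic).const_mul c
  have hker : Integrable (fun y => (1 - c) * williamsonKernel α (y / t)) μ :=
    (integrable_williamsonKernel_div hμ ht.le).const_mul _
  have hf_int : Integrable
      (fun y => c * (Iic t).indicator 1 y + (1 - c) * williamsonKernel α (y / t)) μ :=
    hind.add hker
  have hf_nonneg : 0 ≤ᵐ[μ]
      fun y => c * (Iic t).indicator 1 y + (1 - c) * williamsonKernel α (y / t) :=
    .of_forall fun y =>
      add_nonneg (mul_nonneg williamsonKernel_nonneg (indicator_nonneg (fun _ _ => zero_le_one) _))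
        (mul_nonneg (sub_nonneg.2 hc) williamsonKernel_nonneg)
  rw [← ofReal_integral_eq_lintegral_ofReal hf_int hf_nonneg,
    ENNReal.toReal_ofReal (integral_nonneg_of_ae hf_nonneg), integral_add hind hker,
    integral_const_mul, integral_const_mul, integral_indicator_one measurableSet_Iic]

/-- for κ_x(A) = ∫ (δ_x ▵_α δ_y)(A) μ(dy) with x > 0, one has
κ_x((0,t]) = Ψ(x/t) F_μ(t) + (1 − Ψ(x/t)) G_μ(t) for t ≥ x, and κ_x((0,t]) = 0 for
0 < t < x, where Ψ(s) = (1 − s^α)₊. -/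
theorem kendall_transition_Ioc
    (α : ℝ) (hα : 0 < α)
    (μ : Measure ℝ) [IsProbabilityMeasure μ] (hμ : μ (Set.Iio 0) = 0)
    (Fμ Gμ : ℝ → ℝ)
    (hFμ : ∀ t, Fμ t = (μ (Set.Iic t)).toReal)
    (hGμ : ∀ t, 0 < t → Gμ t = ∫ w, max (1 - (w / t) ^ α) 0 ∂μ)
    (x : ℝ) (hx : 0 < x)
    (κ : Measure ℝ)
    (hκ : ∀ A : Set ℝ, MeasurableSet A → κ A = ∫⁻ y, kendall α x y A ∂μ) :
    (∀ t, x ≤ t → (κ (Set.Ioc 0 t)).toReal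
        = max (1 - (x / t) ^ α) 0 * Fμ t + (1 - max (1 - (x / t) ^ α) 0) * Gμ t) ∧
    (∀ t, 0 < t → t < x → κ (Set.Ioc 0 t) = 0) := by
  have hμ_nonneg : ∀ᵐ y ∂μ, 0 ≤ y := by
    rw [ae_iff]
    simpa only [not_le, Iio_def] using hμ
  refine ⟨fun t hxt => ?_, fun t _ htx => ?_⟩
  · rw [hκ _ measurableSet_Ioc, toReal_lintegral_kendall_apply_Ioc hμ_nonneg hα hx hxt, hFμ,
      hGμ t (hx.trans_le hxt)]
    rfl
  · rw [hκ _ measurableSet_Ioc]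
    simp [kendall_apply_Ioc_of_lt_max (htx.trans_le (le_max_left x _))]
end

section
/- Let μ be a probability measure on [0,∞) with cumulative distribution function F_μ, Williamson transform G_μ, truncated α-moment H_μ, and Ψ(s) = (1 − s^α)₊. Fix x > 0 and define the measure κ_x(A) = ∫_{[0,∞)} (δ_x ▵_α δ_y)(A) μ(dy). Then for every t ≥ x, ∫_{(0,t]} w^α κ_x(dw) = x^α F_μ(t) − 2 x^α t^{−α} H_μ(t) + H_μ(t) = x^α G_μ(t) + Ψ(x/t) H_μ(t), and for every 0 < t < x this integral equals 0. -/
/-!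
Conditionally on `y`, the measure `δ_x ▵_α δ_y` lives on `[M, ∞)` with `M = max x y`; for `M ≤ t`
its Pareto part has truncated `α`-moment `2 M^α (1 - (M/t)^α)`, and adding the atom at `M` gives
`x^α (1 - (y/t)^α) + y^α (1 - (x/t)^α)`. Integrating this against `μ` over `y ∈ [0, t]` yields
`x^α G_μ(t) + Ψ(x/t) H_μ(t)`, and `G_μ(t) = F_μ(t) - t^{-α} H_μ(t)` gives the other form.
-/

open MeasureTheory Filter Real Topology

open Set

lemma one_sub_div_rpow_nonneg {a b α : ℝ} (ha : 0 ≤ a) (hab : a ≤ b) (hα : 0 ≤ α) :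
    0 ≤ 1 - (a / b) ^ α :=
  sub_nonneg.2 <|
    rpow_le_one (div_nonneg ha (ha.trans hab)) (div_le_one_of_le₀ hab (ha.trans hab)) hα

instance (α : ℝ) : SFinite (pareto α) := by unfold pareto; infer_instance

lemma measurable_kendall (α x : ℝ) : Measurable (kendall α x) := by
  refine Measure.measurable_of_measurable_coe _ fun A hA => ?_
  have hM : Measurable fun y : ℝ => max x y := measurable_const.max measurable_id
  have hρ : Measurable fun y : ℝ => (min x y / max x y) ^ α := by fun_prop
  have hpre (ν : Measure ℝ) [SFinite ν] : Measurable fun y => ν ((max x y * ·) ⁻¹' A) :=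
    measurable_measure_prodMk_left (((hM.comp measurable_fst).mul measurable_snd) hA)
  simp only [kendall, Measure.map_apply (measurable_const_mul _) hA, Measure.add_apply,
    Measure.smul_apply, smul_eq_mul]
  exact (hρ.ennreal_ofReal.mul (hpre _)).add ((measurable_const.sub hρ).ennreal_ofReal.mul (hpre _))

lemma setLIntegral_Ioc_rpow_pareto {α T : ℝ} (hα : 0 < α) (hT : 1 ≤ T) :
    ∫⁻ u in Ioc 0 T, ENNReal.ofReal (u ^ α) ∂pareto α = ENNReal.ofReal (2 * (1 - T ^ (-α))) := by
  have hIcc : Ioc 0 T ∩ Ici 1 = Icc 1 T := by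
    ext u
    simp only [mem_inter_iff, mem_Ioc, mem_Ici, mem_Icc]
    exact ⟨fun h => ⟨h.2, h.1.2⟩, fun h => ⟨⟨by linarith [h.1], h.2⟩, h.1⟩⟩
  have hdensity : EqOn ((fun u => ENNReal.ofReal (2 * α * u ^ (-2 * α - 1))) *
      fun u => ENNReal.ofReal (u ^ α)) (fun u => ENNReal.ofReal (2 * α * u ^ (-α - 1))) (Icc 1 T) :=
    fun u hu => by
      have hu : 0 < u := by linarith [hu.1]
      rw [Pi.mul_apply, ← ENNReal.ofReal_mul (by positivity), mul_assoc, ← rpow_add hu]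
      ring_nf
  have hint : ∫ u in (1 : ℝ)..T, u ^ (-α - 1) = (1 - T ^ (-α)) / α := by
    rw [integral_rpow (Or.inr ⟨by linarith, by simp [uIcc_of_le hT]⟩), one_rpow]
    ring_nf
  have hcont : ContinuousOn (fun u : ℝ => 2 * α * u ^ (-α - 1)) (Icc 1 T) :=
    continuousOn_const.mul
      (continuousOn_id.rpow_const fun u hu => Or.inl (zero_lt_one.trans_le hu.1).ne')
  rw [pareto, setLIntegral_withDensity_eq_setLIntegral_mul _ (by fun_prop) (by fun_prop)
    measurableSet_Ioc, Measure.restrict_restrict measurableSet_Ioc, hIcc,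
    setLIntegral_congr_fun measurableSet_Icc hdensity,
    ← ofReal_integral_eq_lintegral_ofReal (hcont.integrableOn_compact isCompact_Icc),
    integral_Icc_eq_integral_Ioc, ← intervalIntegral.integral_of_le hT,
    intervalIntegral.integral_const_mul, hint]
  · field_simp
  · filter_upwards [ae_restrict_mem measurableSet_Icc] with u hu
    have : 0 < u := by linarith [hu.1]
    positivity

lemma pareto_Iio_one (α : ℝ) : pareto α (Iio 1) = 0 := by
  rw [pareto, withDensity_apply _ measurableSet_Iio, Measure.restrict_restrict measurableSet_Iio,
    Iio_inter_Ici, Ico_self, Measure.restrict_empty, lintegral_zero_measure]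

lemma kendall_Iio_max_eq_zero (α : ℝ) {x y : ℝ} (h : 0 < max x y) :
    kendall α x y (Iio (max x y)) = 0 := by
  have hpre : (max x y * ·) ⁻¹' Iio (max x y) = Iio 1 := by
    ext u
    simp [mul_lt_iff_lt_one_right h]
  simp [kendall, Measure.map_apply (measurable_const_mul _) measurableSet_Iio, hpre, pareto_Iio_one]

lemma setLIntegral_Ioc_rpow_kendall {α x y t : ℝ} (hα : 0 < α) (hx : 0 ≤ x) (hy : 0 ≤ y)
    (hM : 0 < max x y) (ht : max x y ≤ t) :
    ∫⁻ w in Ioc 0 t, ENNReal.ofReal (w ^ α) ∂kendall α x y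
      = ENNReal.ofReal (x ^ α * (1 - (y / t) ^ α) + y ^ α * (1 - (x / t) ^ α)) := by
  set M := max x y
  have hpre : (M * ·) ⁻¹' Ioc 0 t = Ioc 0 (t / M) := by
    ext u
    simp [mul_pos_iff_of_pos_left hM, le_div_iff₀' hM]
  have hscale : EqOn (fun u => ENNReal.ofReal ((M * u) ^ α))
      (fun u => ENNReal.ofReal (M ^ α) * ENNReal.ofReal (u ^ α)) (Ioc 0 (t / M)) := fun u hu => by
    simp only [mul_rpow hM.le hu.1.le, ENNReal.ofReal_mul (rpow_nonneg hM.le α)]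
  have h1 : 1 ∈ Ioc 0 (t / M) := ⟨one_pos, (one_le_div hM).2 ht⟩
  have hm : 0 ≤ min x y := le_min hx hy
  have hρ : 0 ≤ (min x y / M) ^ α := by positivity
  have hρ1 : 0 ≤ 1 - (min x y / M) ^ α := one_sub_div_rpow_nonneg hm min_le_max hα.le
  have htail : (t / M) ^ (-α) ≤ 1 := rpow_le_one_of_one_le_of_nonpos h1.2 (by linarith)
  have ht0 : 0 < t := hM.trans_le ht
  have hMα : 0 ≤ M ^ α := rpow_nonneg hM.le α
  -- `ρ M^α = (min x y)^α`, after which both sides are symmetric in `x` and `y`.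
  have hmix : (min x y / M) ^ α * (M ^ α * (2 * (1 - (t / M) ^ (-α)))) +
      (1 - (min x y / M) ^ α) * (M * 1) ^ α
        = x ^ α * (1 - (y / t) ^ α) + y ^ α * (1 - (x / t) ^ α) := by
    have hMpos : 0 < M ^ α := rpow_pos_of_pos hM α
    rw [rpow_neg (by positivity), div_rpow hm hM.le, div_rpow ht0.le hM.le, div_rpow hy ht0.le,
      div_rpow hx ht0.le, mul_one]
    rcases le_total x y with h | h <;> simp only [M, min_eq_left, min_eq_right, max_eq_left,
      max_eq_right, h] at hMpos ⊢ <;> field_simp <;> ring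
  rw [kendall, setLIntegral_map measurableSet_Ioc (by fun_prop) (measurable_const_mul M), hpre,
    Measure.restrict_add, lintegral_add_measure, Measure.restrict_smul, Measure.restrict_smul,
    lintegral_smul_measure, lintegral_smul_measure, setLIntegral_congr_fun measurableSet_Ioc hscale,
    lintegral_const_mul _ (by fun_prop), setLIntegral_Ioc_rpow_pareto hα h1.2,
    setLIntegral_dirac' (by fun_prop) measurableSet_Ioc, if_pos h1, smul_eq_mul, smul_eq_mul,
    ← hmix, ENNReal.ofReal_add (mul_nonneg hρ (mul_nonneg hMα (by linarith)))
      (mul_nonneg hρ1 (by positivity)), ENNReal.ofReal_mul hρ, ENNReal.ofReal_mul hMα,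
    ENNReal.ofReal_mul hρ1]

lemma integral_max_one_sub_div_rpow_eq_setIntegral_Icc {α t : ℝ} {μ : Measure ℝ} (hα : 0 < α)
    (hμ : ∀ᵐ w ∂μ, 0 ≤ w) (ht : 0 < t) :
    ∫ w, max (1 - (w / t) ^ α) 0 ∂μ = ∫ w in Icc 0 t, (1 - (w / t) ^ α) ∂μ := by
  rw [← integral_indicator measurableSet_Icc]
  refine integral_congr_ae (hμ.mono fun w hw => ?_)
  dsimp only
  rcases le_or_gt w t with hwt | hwt
  · rw [indicator_of_mem (show w ∈ Icc 0 t from ⟨hw, hwt⟩),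
      max_eq_left (one_sub_div_rpow_nonneg hw hwt hα.le)]
  · rw [indicator_of_notMem fun h => hwt.not_ge h.2, max_eq_right (sub_nonpos.2
      (one_le_rpow ((one_le_div ht).2 hwt.le) hα.le))]

lemma setIntegral_Icc_one_sub_div_rpow {α t : ℝ} (μ : Measure ℝ) [IsFiniteMeasure μ] (hα : 0 ≤ α)
    (ht : 0 < t) :
    ∫ w in Icc 0 t, (1 - (w / t) ^ α) ∂μ
      = μ.real (Icc 0 t) - t ^ (-α) * ∫ w in Icc 0 t, w ^ α ∂μ := by
  have hint : IntegrableOn (fun w : ℝ => w ^ α) (Icc 0 t) μ :=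
    (continuous_rpow_const hα).continuousOn.integrableOn_compact isCompact_Icc
  rw [setIntegral_congr_fun measurableSet_Icc fun w hw => by
      rw [div_rpow hw.1 ht.le, div_eq_mul_inv, ← rpow_neg ht.le],
    integral_sub (integrable_const 1) (hint.mul_const _), integral_mul_const, setIntegral_const,
    smul_eq_mul, mul_one, mul_comm]

lemma setIntegral_Ioc_rpow_bind_kendall {α x t : ℝ} {μ : Measure ℝ} [IsFiniteMeasure μ]
    (hα : 0 < α) (hμ : ∀ᵐ y ∂μ, 0 ≤ y) (hx : 0 < x) (hxt : x ≤ t) :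
    ∫ w in Ioc 0 t, w ^ α ∂μ.bind (kendall α x)
      = x ^ α * ∫ y in Icc 0 t, (1 - (y / t) ^ α) ∂μ
        + (1 - (x / t) ^ α) * ∫ y in Icc 0 t, y ^ α ∂μ := by
  have ht : 0 < t := hx.trans_le hxt
  set g : ℝ → ℝ := fun y => x ^ α * (1 - (y / t) ^ α) + y ^ α * (1 - (x / t) ^ α)
  have hg : ∀ y ∈ Icc 0 t, 0 ≤ g y := fun y hy =>
    add_nonneg (mul_nonneg (rpow_nonneg hx.le α) (one_sub_div_rpow_nonneg hy.1 hy.2 hα.le))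
      (mul_nonneg (rpow_nonneg hy.1 α) (one_sub_div_rpow_nonneg hx.le hxt hα.le))
  have hint (f : ℝ → ℝ) (hf : Continuous f) : IntegrableOn f (Icc 0 t) μ :=
    hf.continuousOn.integrableOn_compact isCompact_Icc
  have hlin : ∫ y in Icc 0 t, g y ∂μ = x ^ α * ∫ y in Icc 0 t, (1 - (y / t) ^ α) ∂μ
      + (1 - (x / t) ^ α) * ∫ y in Icc 0 t, y ^ α ∂μ := by
    rw [integral_add ((hint _ (by fun_prop (disch := exact hα.le))).const_mul _)
      ((hint _ (continuous_rpow_const hα.le)).mul_const _), integral_const_mul, integral_mul_const,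
      mul_comm (∫ y in Icc 0 t, y ^ α ∂μ)]
  rw [← hlin, integral_eq_lintegral_of_nonneg_ae, integral_eq_lintegral_of_nonneg_ae]
  · congr 1
    rw [← lintegral_indicator measurableSet_Ioc, Measure.lintegral_bind
      (measurable_kendall α x).aemeasurable (by fun_prop (disch := exact measurableSet_Ioc)),
      ← lintegral_indicator measurableSet_Icc]
    refine lintegral_congr_ae (hμ.mono fun y hy => ?_)
    dsimp only
    rw [lintegral_indicator measurableSet_Ioc]
    by_cases hyt : y ≤ t
    · rw [indicator_of_mem (show y ∈ Icc 0 t from ⟨hy, hyt⟩)]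
      exact setLIntegral_Ioc_rpow_kendall hα hx.le hy (lt_max_of_lt_left hx) (max_le hxt hyt)
    · rw [indicator_of_notMem fun h => hyt h.2]
      exact setLIntegral_measure_zero _ _ (measure_mono_null
        (fun w hw => hw.2.trans_lt ((not_le.1 hyt).trans_le (le_max_right x y)))
        (kendall_Iio_max_eq_zero α (lt_max_of_lt_left hx)))
  · exact (ae_restrict_mem measurableSet_Icc).mono hg
  · fun_prop
  · exact (ae_restrict_mem measurableSet_Ioc).mono fun w hw => rpow_nonneg hw.1.le α
  · fun_prop

/-- for κ_x(A) = ∫ (δ_x ▵_α δ_y)(A) μ(dy) with x > 0, one has for t ≥ x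
∫_{(0,t]} w^α κ_x(dw) = x^α F_μ(t) − 2 x^α t^{−α} H_μ(t) + H_μ(t)
                      = x^α G_μ(t) + Ψ(x/t) H_μ(t),
and the integral is 0 for 0 < t < x, where Ψ(s) = (1 − s^α)₊. -/
theorem kendall_transition_truncated_moment
    (α : ℝ) (hα : 0 < α)
    (μ : Measure ℝ) [IsProbabilityMeasure μ] (hμ : μ (Set.Iio 0) = 0)
    (Fμ Gμ Hμ : ℝ → ℝ)
    (hFμ : ∀ t, Fμ t = (μ (Set.Iic t)).toReal)
    (hGμ : ∀ t, 0 < t → Gμ t = ∫ w, max (1 - (w / t) ^ α) 0 ∂μ)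
    (hHμ : ∀ t, 0 < t → Hμ t = ∫ w in Set.Icc 0 t, w ^ α ∂μ)
    (x : ℝ) (hx : 0 < x)
    (κ : Measure ℝ)
    (hκ : ∀ A : Set ℝ, MeasurableSet A → κ A = ∫⁻ y, kendall α x y A ∂μ) :
    (∀ t, x ≤ t →
      (∫ w in Set.Ioc 0 t, w ^ α ∂κ)
          = x ^ α * Fμ t - 2 * x ^ α * t ^ (-α) * Hμ t + Hμ t ∧
      (∫ w in Set.Ioc 0 t, w ^ α ∂κ)
          = x ^ α * Gμ t + max (1 - (x / t) ^ α) 0 * Hμ t) ∧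
    (∀ t, 0 < t → t < x → ∫ w in Set.Ioc 0 t, w ^ α ∂κ = 0) := by
  have hμ' : ∀ᵐ y ∂μ, 0 ≤ y := ae_iff.2 (measure_mono_null (fun _ hy => not_le.1 hy) hμ)
  have hκμ : κ = μ.bind (kendall α x) := Measure.ext fun A hA => by
    rw [hκ A hA, Measure.bind_apply hA (measurable_kendall α x).aemeasurable]
  refine ⟨fun t hxt => ?_, fun t _ htx => ?_⟩
  · have ht : 0 < t := hx.trans_le hxt
    have hF : Fμ t = μ.real (Icc 0 t) := by
      rw [hFμ, ← Iic_inter_Ici, measureReal_def, measure_inter_conull (by rwa [compl_Ici])]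
    have hG : Gμ t = ∫ y in Icc 0 t, (1 - (y / t) ^ α) ∂μ :=
      (hGμ t ht).trans (integral_max_one_sub_div_rpow_eq_setIntegral_Icc hα hμ' ht)
    have hGF : Gμ t = Fμ t - t ^ (-α) * Hμ t := by
      rw [hG, setIntegral_Icc_one_sub_div_rpow μ hα.le ht, hF, hHμ t ht]
    rw [hκμ, setIntegral_Ioc_rpow_bind_kendall hα hμ' hx hxt, ← hHμ t ht, ← hG,
      max_eq_left (one_sub_div_rpow_nonneg hx.le hxt hα.le),
      div_rpow hx.le ht.le, div_eq_mul_inv, ← rpow_neg ht.le]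
    exact ⟨by rw [hGF]; ring, rfl⟩
  · have hnull : κ (Ioc 0 t) = 0 := by
      rw [hκ _ measurableSet_Ioc]
      exact (lintegral_congr fun y => measure_mono_null
        (fun w hw => hw.2.trans_lt (htx.trans_le (le_max_left x y)))
        (kendall_Iio_max_eq_zero α (lt_max_of_lt_left hx))).trans lintegral_zero
    rw [Measure.restrict_eq_zero.2 hnull, integral_zero_measure]
end

section
/- Let Y, ξ, θ be independent random variables on a probability space, with Y distributed according to ν, ξ uniform on [0,1], and θ Pareto distributed with density 2α u^{−2α−1} on [1,∞). Fix x > 0 and set M = max(x,Y), m = min(x,Y), ρ = (m/M)^α, and Z = M·( 1_{{ξ > ρ}} + θ·1_{{ξ < ρ}} ). Then for every t ≥ x, P(Z ≤ t) = Ψ(x/t) F(t) + (1 − Ψ(x/t)) G(t), where Ψ(s) = (1 − s^α)₊, and for every 0 < t < x, P(Z ≤ t) = 0. -/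
open MeasureTheory Filter Real Topology ProbabilityTheory
open Set
open scoped ENNReal

section Pareto

variable {α : ℝ}

lemma pareto_apply (α : ℝ) {s : Set ℝ} (hs : MeasurableSet s) :
    pareto α s = ∫⁻ u in s ∩ Ici 1, ENNReal.ofReal (2 * α * u ^ (-2 * α - 1)) := by
  rw [pareto, withDensity_apply _ hs, Measure.restrict_restrict hs]

instance inst_s8 (α : ℝ) : SFinite (pareto α) := by
  unfold pareto
  infer_instance

lemma isProbabilityMeasure_pareto (hα : 0 < α) : IsProbabilityMeasure (pareto α) := by
  refine ⟨?_⟩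
  rw [pareto_apply α MeasurableSet.univ, univ_inter, ← Measure.restrict_congr_set Ioi_ae_eq_Ici,
    ← ofReal_integral_eq_lintegral_ofReal
      ((integrableOn_Ioi_rpow_of_lt (by linarith) one_pos).const_mul _)
      ((ae_restrict_iff' measurableSet_Ioi).2 (ae_of_all _ fun u (hu : 1 < u) => by
        have : 0 < u := one_pos.trans hu
        positivity)),
    integral_const_mul, integral_Ioi_rpow_of_lt (by linarith) one_pos,
    show -2 * α - 1 + 1 = -(2 * α) by ring, one_rpow,
    show 2 * α * (-1 / -(2 * α)) = 1 by field_simp, ENNReal.ofReal_one]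

lemma pareto_Iic_of_lt_one (α : ℝ) {c : ℝ} (hc : c < 1) : pareto α (Iic c) = 0 := by
  rw [pareto_apply α measurableSet_Iic, Iic_inter_Ici, Icc_eq_empty_of_lt hc,
    Measure.restrict_empty, lintegral_zero_measure]

lemma pareto_Iic (hα : 0 < α) {c : ℝ} (hc : 1 ≤ c) :
    pareto α (Iic c) = ENNReal.ofReal (1 - c ^ (-(2 * α))) := by
  have hcont : ContinuousOn (fun u : ℝ => 2 * α * u ^ (-2 * α - 1)) (Icc 1 c) :=
    continuousOn_const.mul (continuousOn_id.rpow_const fun u hu =>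
      Or.inl (zero_lt_one.trans_le hu.1).ne')
  have hint : ∫ u in Icc 1 c, 2 * α * u ^ (-2 * α - 1) = 1 - c ^ (-(2 * α)) := by
    rw [integral_Icc_eq_integral_Ioc, ← intervalIntegral.integral_of_le hc,
      intervalIntegral.integral_const_mul,
      integral_rpow (Or.inr ⟨by intro h; nlinarith, fun h => by
        rw [uIcc_of_le hc] at h; linarith [h.1]⟩),
      show -2 * α - 1 + 1 = -(2 * α) by ring, one_rpow]
    field_simp
    ring
  rw [pareto_apply α measurableSet_Iic, Iic_inter_Ici, ← hint,
    ofReal_integral_eq_lintegral_ofReal (hcont.integrableOn_compact isCompact_Icc)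
      ((ae_restrict_iff' measurableSet_Icc).2 (ae_of_all _ fun u hu => by
        have : 0 < u := zero_lt_one.trans_le hu.1
        positivity))]

end Pareto

lemma setLIntegral_Icc_zero_one_of_step {f : ℝ → ℝ≥0∞} {ρ : ℝ} {a b : ℝ≥0∞}
    (hρ₀ : 0 ≤ ρ) (hρ₁ : ρ ≤ 1) (ha : ∀ u, ρ < u → f u = a) (hb : ∀ u, u < ρ → f u = b) :
    ∫⁻ u in Icc 0 1, f u = a * ENNReal.ofReal (1 - ρ) + b * ENNReal.ofReal ρ := by
  have hlow : ∫⁻ u in Icc 0 ρ, f u = b * ENNReal.ofReal ρ := by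
    rw [← Measure.restrict_congr_set Ico_ae_eq_Icc,
      setLIntegral_congr_fun measurableSet_Ico fun u hu => hb u hu.2, setLIntegral_const,
      Real.volume_Ico, sub_zero]
  have hhigh : ∫⁻ u in Ioc ρ 1, f u = a * ENNReal.ofReal (1 - ρ) := by
    rw [setLIntegral_congr_fun measurableSet_Ioc fun u hu => ha u hu.1, setLIntegral_const,
      Real.volume_Ioc]
  rw [← Icc_union_Ioc_eq_Icc hρ₀ hρ₁,
    lintegral_union measurableSet_Ioc ((Iic_disjoint_Ioc le_rfl).mono_left Icc_subset_Iic_self),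
    hlow, hhigh, add_comm]

lemma min_div_max_rpow_mul_max_div_rpow {α x y t : ℝ} (hx : 0 < x) (hy : 0 ≤ y) (ht : 0 < t) :
    (min x y / max x y) ^ α * (max x y / t) ^ (2 * α) = (x / t) ^ α * (y / t) ^ α := by
  have hM : 0 < max x y := lt_max_of_lt_left hx
  have hm : 0 ≤ min x y := le_min hx.le hy
  have hxy : min x y ^ α * max x y ^ α = x ^ α * y ^ α := by
    rw [← mul_rpow hm hM.le, ← mul_rpow hx.le hy, min_mul_max]
  have hMα : max x y ^ α ≠ 0 := (rpow_pos_of_pos hM α).ne'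
  have htα : t ^ α ≠ 0 := (rpow_pos_of_pos ht α).ne'
  rw [div_rpow hm hM.le, div_rpow hM.le ht.le, div_rpow hx.le ht.le, div_rpow hy ht.le,
    two_mul, rpow_add hM, rpow_add ht]
  field_simp
  linear_combination hxy

section KendallStep

variable {α x y t : ℝ}

noncomputable def kendallRatio (α x y : ℝ) : ℝ := (min x y / max x y) ^ α

/-- `Z` as a function of `p = (Y, ξ, θ)`. -/
noncomputable def kendallStep (α x : ℝ) (p : ℝ × ℝ × ℝ) : ℝ :=
  max x p.1 * ((if kendallRatio α x p.1 < p.2.1 then 1 else 0) +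
    p.2.2 * (if p.2.1 < kendallRatio α x p.1 then 1 else 0))

lemma kendallRatio_nonneg (hx : 0 < x) (hy : 0 ≤ y) : 0 ≤ kendallRatio α x y :=
  rpow_nonneg (div_nonneg (le_min hx.le hy) (lt_max_of_lt_left hx).le) α

lemma kendallRatio_le_one (hα : 0 ≤ α) (hx : 0 < x) (hy : 0 ≤ y) : kendallRatio α x y ≤ 1 :=
  rpow_le_one (div_nonneg (le_min hx.le hy) (lt_max_of_lt_left hx).le)
    (div_le_one_of_le₀ min_le_max (lt_max_of_lt_left hx).le) hα

lemma measurable_kendallStep (α x : ℝ) : Measurable (kendallStep α x) := by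
  have hρ : Measurable fun p : ℝ × ℝ × ℝ => kendallRatio α x p.1 :=
    ((measurable_const.min measurable_fst).div (measurable_const.max measurable_fst)).pow_const α
  refine (measurable_const.max measurable_fst).mul (Measurable.add ?_ ?_)
  · exact Measurable.ite (measurableSet_lt hρ measurable_snd.fst) measurable_const
      measurable_const
  · exact measurable_snd.snd.mul (Measurable.ite (measurableSet_lt measurable_snd.fst hρ)
      measurable_const measurable_const)

/-- The conditional probability of `Z ≤ t` given `Y = y`. -/
lemma uniform_prod_pareto_kendallStep_le (hα : 0 < α) (hx : 0 < x) (hy : 0 ≤ y) (t : ℝ) :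
    ((volume.restrict (Icc 0 1)).prod (pareto α)) {q | kendallStep α x (y, q) ≤ t}
      = (if max x y ≤ t then 1 else 0) * ENNReal.ofReal (1 - kendallRatio α x y)
        + pareto α (Iic (t / max x y)) * ENNReal.ofReal (kendallRatio α x y) := by
  have := isProbabilityMeasure_pareto hα
  have hM : 0 < max x y := lt_max_of_lt_left hx
  have hmeas : MeasurableSet {q : ℝ × ℝ | kendallStep α x (y, q) ≤ t} :=
    measurableSet_le ((measurable_kendallStep α x).comp measurable_prodMk_left) measurable_const
  rw [Measure.prod_apply hmeas]
  refine setLIntegral_Icc_zero_one_of_step (kendallRatio_nonneg hx hy)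
    (kendallRatio_le_one hα.le hx hy) (fun u hu => ?_) (fun u hu => ?_)
  · have hstep : ∀ s, kendallStep α x (y, u, s) = max x y := fun s => by
      simp [kendallStep, hu, hu.not_gt]
    by_cases hMt : max x y ≤ t <;> simp [hstep, hMt]
  · have hstep : ∀ s, kendallStep α x (y, u, s) = max x y * s := fun s => by
      simp [kendallStep, hu, hu.not_gt]
    congr 1
    ext s
    simp [hstep, le_div_iff₀ hM, mul_comm]

lemma uniform_prod_pareto_kendallStep_le_of_lt (hα : 0 < α) (hx : 0 < x) (hy : 0 ≤ y)
    (ht : t < max x y) :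
    ((volume.restrict (Icc 0 1)).prod (pareto α)) {q | kendallStep α x (y, q) ≤ t} = 0 := by
  rw [uniform_prod_pareto_kendallStep_le hα hx hy, if_neg ht.not_ge,
    pareto_Iic_of_lt_one α ((div_lt_one (lt_max_of_lt_left hx)).2 ht)]
  simp

lemma uniform_prod_pareto_kendallStep_le_of_le (hα : 0 < α) (hx : 0 < x) (hy : 0 ≤ y)
    (ht : max x y ≤ t) :
    ((volume.restrict (Icc 0 1)).prod (pareto α)) {q | kendallStep α x (y, q) ≤ t}
      = ENNReal.ofReal (1 - (x / t) ^ α * (y / t) ^ α) := by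
  have hM : 0 < max x y := lt_max_of_lt_left hx
  have htpos : 0 < t := hM.trans_le ht
  have hρ₀ := kendallRatio_nonneg (α := α) hx hy
  have hρ₁ := kendallRatio_le_one hα.le hx hy
  have htM : 1 ≤ t / max x y := (one_le_div hM).2 ht
  have hq : (t / max x y) ^ (-(2 * α)) = (max x y / t) ^ (2 * α) := by
    rw [rpow_neg (div_nonneg htpos.le hM.le), ← inv_rpow (div_nonneg htpos.le hM.le), inv_div]
  have hq₁ : (max x y / t) ^ (2 * α) ≤ 1 :=
    rpow_le_one (div_nonneg hM.le htpos.le) ((div_le_one htpos).2 ht) (by positivity)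
  rw [uniform_prod_pareto_kendallStep_le hα hx hy, if_pos ht, one_mul, pareto_Iic hα htM, hq,
    ← ENNReal.ofReal_mul (by linarith), ← ENNReal.ofReal_add (by linarith)
      (mul_nonneg (by linarith) hρ₀), ← min_div_max_rpow_mul_max_div_rpow hx hy htpos,
    kendallRatio]
  ring_nf

end KendallStep

lemma map_prodMk_prodMk_eq_prod_of_iIndepFun {Ω β : Type*} [MeasurableSpace Ω]
    [MeasurableSpace β] {P : Measure Ω} [IsFiniteMeasure P] {f g h : Ω → β}
    (hf : Measurable f) (hg : Measurable g) (hh : Measurable h) (hind : iIndepFun ![f, g, h] P) :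
    P.map (fun ω => (f ω, g ω, h ω)) = (P.map f).prod ((P.map g).prod (P.map h)) := by
  have hmeas : ∀ i, Measurable (![f, g, h] i) := fun i => by fin_cases i <;> assumption
  have hgh : IndepFun g h P := by simpa using hind.indepFun (i := 1) (j := 2) (by decide)
  have hf_gh : IndepFun f (fun ω => (g ω, h ω)) P := by
    simpa using (hind.indepFun_prodMk hmeas 1 2 0 (by decide) (by decide)).symm
  rw [(indepFun_iff_map_prod_eq_prod_map_map hf.aemeasurable
      (hg.prodMk hh).aemeasurable).1 hf_gh,
    (indepFun_iff_map_prod_eq_prod_map_map hg.aemeasurable hh.aemeasurable).1 hgh]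

section Williamson

variable {ν : Measure ℝ} {α t : ℝ}

lemma measure_Iic_eq_measure_Icc_zero (hν : ∀ᵐ y ∂ν, 0 ≤ y) (t : ℝ) :
    ν (Iic t) = ν (Icc 0 t) :=
  measure_congr (eventuallyEq_set.2 (hν.mono fun _ hy => ⟨fun h => ⟨hy, h⟩, fun h => h.2⟩))

lemma integrableOn_div_rpow_Icc [IsFiniteMeasure ν] (hα : 0 ≤ α) (t : ℝ) :
    IntegrableOn (fun y => (y / t) ^ α) (Icc 0 t) ν :=
  ((continuous_id.div_const t).rpow_const fun _ => Or.inr hα).integrableOn_Icc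

lemma integral_williamson [IsFiniteMeasure ν] (hα : 0 ≤ α) (hν : ∀ᵐ y ∂ν, 0 ≤ y) (ht : 0 < t) :
    ∫ y, max (1 - (y / t) ^ α) 0 ∂ν = ν.real (Icc 0 t) - ∫ y in Icc 0 t, (y / t) ^ α ∂ν := by
  have hcut : (fun y => max (1 - (y / t) ^ α) 0)
      =ᵐ[ν] (Icc 0 t).indicator fun y => 1 - (y / t) ^ α := by
    filter_upwards [hν] with y hy
    by_cases hyt : y ≤ t
    · rw [indicator_of_mem (mem_Icc.2 ⟨hy, hyt⟩), max_eq_left (sub_nonneg.2 (rpow_le_one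
        (div_nonneg hy ht.le) ((div_le_one ht).2 hyt) hα))]
    · rw [indicator_of_notMem fun h => hyt h.2, max_eq_right (sub_nonpos.2 (one_le_rpow
        ((one_le_div ht).2 (not_le.1 hyt).le) hα))]
  rw [integral_congr_ae hcut, integral_indicator measurableSet_Icc,
    integral_sub (integrable_const 1) (integrableOn_div_rpow_Icc hα t), setIntegral_const,
    smul_eq_mul, mul_one]

end Williamson

lemma toReal_lintegral_kendallStep_le {ν : Measure ℝ} [IsFiniteMeasure ν] {α x t : ℝ}
    (hα : 0 < α) (hν : ∀ᵐ y ∂ν, 0 ≤ y) (hx : 0 < x) (hxt : x ≤ t) :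
    (∫⁻ y, ((volume.restrict (Icc 0 1)).prod (pareto α))
        {q | kendallStep α x (y, q) ≤ t} ∂ν).toReal =
      ν.real (Icc 0 t) - (x / t) ^ α * ∫ y in Icc 0 t, (y / t) ^ α ∂ν := by
  have ht : 0 < t := hx.trans_le hxt
  have hslice : (fun y => ((volume.restrict (Icc 0 1)).prod (pareto α))
        {q | kendallStep α x (y, q) ≤ t})
      =ᵐ[ν] (Icc 0 t).indicator fun y => ENNReal.ofReal (1 - (x / t) ^ α * (y / t) ^ α) := by
    filter_upwards [hν] with y hy
    by_cases hyt : y ≤ t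
    · rw [indicator_of_mem (mem_Icc.2 ⟨hy, hyt⟩)]
      exact uniform_prod_pareto_kendallStep_le_of_le hα hx hy (max_le hxt hyt)
    · rw [indicator_of_notMem fun h => hyt h.2]
      exact uniform_prod_pareto_kendallStep_le_of_lt hα hx hy
        (lt_max_of_lt_right (not_le.1 hyt))
  have hnonneg : ∀ y ∈ Icc 0 t, 0 ≤ 1 - (x / t) ^ α * (y / t) ^ α := fun y hy => by
    have h₁ : (x / t) ^ α ≤ 1 :=
      rpow_le_one (div_nonneg hx.le ht.le) ((div_le_one ht).2 hxt) hα.le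
    have h₂ : (y / t) ^ α ≤ 1 :=
      rpow_le_one (div_nonneg hy.1 ht.le) ((div_le_one ht).2 hy.2) hα.le
    nlinarith [rpow_nonneg (div_nonneg hx.le ht.le) α, rpow_nonneg (div_nonneg hy.1 ht.le) α]
  have hint : IntegrableOn (fun y => 1 - (x / t) ^ α * (y / t) ^ α) (Icc 0 t) ν :=
    (integrable_const 1).sub ((integrableOn_div_rpow_Icc hα.le t).const_mul _)
  rw [lintegral_congr_ae hslice, lintegral_indicator measurableSet_Icc,
    ← ofReal_integral_eq_lintegral_ofReal hint
      ((ae_restrict_iff' measurableSet_Icc).2 (ae_of_all _ hnonneg)),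
    ENNReal.toReal_ofReal (setIntegral_nonneg measurableSet_Icc hnonneg),
    integral_sub (integrable_const 1) ((integrableOn_div_rpow_Icc hα.le t).const_mul _),
    setIntegral_const, integral_const_mul, smul_eq_mul, mul_one]

/-- one-step transition law of the Kendall random walk. If Y ~ ν, ξ ~ U[0,1],
θ ~ Pareto(2α) are independent, x > 0, M = max(x,Y), m = min(x,Y), ρ = (m/M)^α and
Z = M·(1_{ξ>ρ} + θ·1_{ξ<ρ}), then P(Z ≤ t) = Ψ(x/t) F(t) + (1 − Ψ(x/t)) G(t) for t ≥ x,
with Ψ(s) = (1 − s^α)₊, and P(Z ≤ t) = 0 for 0 < t < x. -/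
theorem kendall_one_step_law
    (α : ℝ) (hα : 0 < α)
    (ν : Measure ℝ) [IsProbabilityMeasure ν] (hν : ν (Set.Iio 0) = 0)
    (F G : ℝ → ℝ)
    (hF : ∀ t, F t = (ν (Set.Iic t)).toReal)
    (hG : ∀ t, 0 < t → G t = ∫ x, max (1 - (x / t) ^ α) 0 ∂ν)
    {Ω : Type*} [MeasurableSpace Ω] (P : Measure Ω) [IsProbabilityMeasure P]
    (Y ξ θ : Ω → ℝ) (hY : Measurable Y) (hξ : Measurable ξ) (hθ : Measurable θ)
    (hindep : iIndepFun ![Y, ξ, θ] P)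
    (hYlaw : Measure.map Y P = ν)
    (hξlaw : Measure.map ξ P = volume.restrict (Set.Icc 0 1))
    (hθlaw : Measure.map θ P = pareto α)
    (x : ℝ) (hx : 0 < x)
    (Z : Ω → ℝ)
    (hZ : ∀ ω, Z ω = max x (Y ω) *
      ((if (min x (Y ω) / max x (Y ω)) ^ α < ξ ω then 1 else 0) +
        θ ω * (if ξ ω < (min x (Y ω) / max x (Y ω)) ^ α then 1 else 0))) :
    (∀ t, x ≤ t → (P {ω | Z ω ≤ t}).toReal
        = max (1 - (x / t) ^ α) 0 * F t + (1 - max (1 - (x / t) ^ α) 0) * G t) ∧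
    (∀ t, 0 < t → t < x → P {ω | Z ω ≤ t} = 0) := by
  have hν₀ : ∀ᵐ y ∂ν, 0 ≤ y := ae_iff.2 (measure_mono_null (fun _ => not_le.1) hν)
  have hZ' : Z = kendallStep α x ∘ fun ω => (Y ω, ξ ω, θ ω) := funext hZ
  have hlaw : ∀ t, P {ω | Z ω ≤ t} = ∫⁻ y,
      ((volume.restrict (Icc 0 1)).prod (pareto α)) {q | kendallStep α x (y, q) ≤ t} ∂ν := by
    intro t
    have hs := measurableSet_le (measurable_kendallStep α x) (measurable_const (a := t))
    rw [hZ']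
    change P ((fun ω => (Y ω, ξ ω, θ ω)) ⁻¹' {p | kendallStep α x p ≤ t}) = _
    rw [← Measure.map_apply (hY.prodMk (hξ.prodMk hθ)) hs,
      map_prodMk_prodMk_eq_prod_of_iIndepFun hY hξ hθ hindep, hYlaw, hξlaw, hθlaw,
      Measure.prod_apply hs]
    rfl
  refine ⟨fun t hxt => ?_, fun t _ htx => ?_⟩
  · have ht : 0 < t := hx.trans_le hxt
    have hc : (x / t) ^ α ≤ 1 :=
      rpow_le_one (div_nonneg hx.le ht.le) ((div_le_one ht).2 hxt) hα.le
    rw [hlaw, toReal_lintegral_kendallStep_le hα hν₀ hx hxt, hF, hG t ht,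
      integral_williamson hα.le hν₀ ht, measure_Iic_eq_measure_Icc_zero hν₀,
      max_eq_left (sub_nonneg.2 hc), measureReal_def]
    ring
  · rw [hlaw, lintegral_congr_ae (hν₀.mono fun y hy =>
      uniform_prod_pareto_kendallStep_le_of_lt hα hx hy (htx.trans_le (le_max_left x y))),
      lintegral_zero]
end

section
/- Let ν be a probability measure on [0,∞) with ν((0,∞)) > 0 whose cumulative distribution function F satisfies lim_{x→∞} x^{2α} (1 − F(x)) = 0. Then the α-moment m = ∫_{[0,∞)} x^α ν(dx) is finite and positive, and for every integer n ≥ 2, the tail F̄_n = 1 − F_n satisfies lim_{x→∞} x^{2α} F̄_n(x) = (1/2) n (n−1) m². -/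
/-!
Write `a = 1 - F` for the tail and `u t = t ^ (-α) * H t`. Splitting the Williamson integral at
`t` gives `G = 1 - a - u`, so `1 - F_n` is a polynomial in `a` and `u`:
`1 - g ^ (n-1) * (n u + g) = (1 - g - u) S(g) + u (1 - g) Q(g)` with `S(g) = ∑_{k<n} g^k` and
`Q(g) = ∑_{k<n-1} (k+1) g^k`.
With `r = t ^ α`, the hypothesis says `r² a → 0`, while `r u = H → m`; since `1 - g - u = a` and
`1 - g = a + u`, the right side times `r²` is `(r² a) S(g) + (r u) (r a + r u) Q(g)`, which tends
to `m² Q(1) = m² n(n-1)/2`. The same bound `a = o(t^{-2α})` makes the layer-cake integral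
`∫ t^{α-1} ν(t, ∞) dt` of the α-moment converge.
-/

open MeasureTheory Filter Real Topology Finset Set

theorem one_sub_mul_sum_range_succ_mul_pow {R : Type*} [CommRing R] (x : R) (m : ℕ) :
    (1 - x) * ∑ k ∈ range m, ((k : R) + 1) * x ^ k =
      ∑ k ∈ range (m + 1), x ^ k - ((m : R) + 1) * x ^ m := by
  induction m with
  | zero => simp
  | succ m ih =>
    rw [sum_range_succ, mul_add, ih, sum_range_succ _ (m + 1)]
    push_cast
    ring

theorem one_sub_pow_mul_add_eq {R : Type*} [CommRing R] (x u : R) (m : ℕ) :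
    1 - x ^ m * (((m : R) + 1) * u + x) =
      (1 - x - u) * ∑ k ∈ range (m + 1), x ^ k +
        u * ((1 - x) * ∑ k ∈ range m, ((k : R) + 1) * x ^ k) := by
  rw [one_sub_mul_sum_range_succ_mul_pow]
  linear_combination (-1 : R) * mul_neg_geom_sum x (m + 1)

theorem sum_range_natCast_add_one (m : ℕ) :
    ∑ k ∈ range m, ((k : ℝ) + 1) = ((m : ℝ) + 1) * m / 2 := by
  induction m with
  | zero => simp
  | succ m ih => rw [sum_range_succ, ih]; push_cast; ring

theorem tendsto_sq_mul_one_sub_pow_mul_add {β : Type*} {l : Filter β} {r a u : β → ℝ} {M : ℝ}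
    (hr : Tendsto r l atTop) (ha : Tendsto (fun x => r x ^ 2 * a x) l (𝓝 0))
    (hu : Tendsto (fun x => r x * u x) l (𝓝 M)) {n : ℕ} (hn : 1 ≤ n) :
    Tendsto (fun x => r x ^ 2 *
        (1 - (1 - a x - u x) ^ (n - 1) * (n * u x + (1 - a x - u x)))) l
      (𝓝 (n * (n - 1) / 2 * M ^ 2)) := by
  obtain ⟨m, rfl⟩ := Nat.exists_eq_add_of_le' hn
  have hdiv {v : β → ℝ} {c : ℝ} (hv : Tendsto (fun x => r x * v x) l (𝓝 c)) :
      Tendsto v l (𝓝 0) := by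
    refine (by simpa using hr.inv_tendsto_atTop.mul hv :
      Tendsto (fun x => (r x)⁻¹ * (r x * v x)) l _).congr' ?_
    filter_upwards [hr.eventually_ne_atTop 0] with x hx
    field_simp
  have hra : Tendsto (fun x => r x * a x) l (𝓝 0) :=
    hdiv (ha.congr fun x => by ring)
  set g := fun x => 1 - a x - u x
  have hg : Tendsto g l (𝓝 1) := by
    simpa using (tendsto_const_nhds.sub (hdiv hra)).sub (hdiv hu)
  have hS : Tendsto (fun x => ∑ k ∈ range (m + 1), g x ^ k) l (𝓝 ((m : ℝ) + 1)) := by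
    simpa using tendsto_finsetSum (range (m + 1)) fun k _ => hg.pow k
  have hQ : Tendsto (fun x => ∑ k ∈ range m, ((k : ℝ) + 1) * g x ^ k) l
      (𝓝 (((m : ℝ) + 1) * m / 2)) := by
    simpa [sum_range_natCast_add_one] using tendsto_finsetSum (range m) fun k _ =>
      (hg.pow k).const_mul ((k : ℝ) + 1)
  have hlim := (ha.mul hS).add ((hu.mul (hra.add hu)).mul hQ)
  have hval : ((m + 1 : ℕ) : ℝ) * ((m + 1 : ℕ) - 1) / 2 * M ^ 2 =
      0 * ((m : ℝ) + 1) + M * (0 + M) * (((m : ℝ) + 1) * m / 2) := by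
    push_cast; ring
  rw [hval]
  refine hlim.congr' (Eventually.of_forall fun x => ?_)
  simp only [Nat.add_sub_cancel]
  push_cast
  rw [one_sub_pow_mul_add_eq]
  ring

theorem tendsto_setIntegral_Icc_zero_atTop {E : Type*} [NormedAddCommGroup E] [NormedSpace ℝ E]
    {μ : Measure ℝ} (hμ : ∀ᵐ x ∂μ, 0 ≤ x) {f : ℝ → E} (hf : Integrable f μ) :
    Tendsto (fun t => ∫ x in Icc 0 t, f x ∂μ) atTop (𝓝 (∫ x, f x ∂μ)) :=
  AECover.integral_tendsto_of_countably_generated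
    { ae_eventually_mem := by
        filter_upwards [hμ] with x hx
        filter_upwards [eventually_ge_atTop x] with t ht using ⟨hx, ht⟩
      measurableSet := fun _ => measurableSet_Icc } hf

theorem integral_max_one_sub_div_rpow {μ : Measure ℝ} [IsFiniteMeasure μ]
    (hμ : ∀ᵐ x ∂μ, 0 ≤ x) {α t : ℝ} (hα : 0 < α) (ht : 0 < t) :
    ∫ x, max (1 - (x / t) ^ α) 0 ∂μ = μ.real (Iic t) - t ^ (-α) * ∫ x in Icc 0 t, x ^ α ∂μ := by
  have hdiv : ∀ x, 0 ≤ x → (x / t) ^ α = t ^ (-α) * x ^ α := fun x hx => by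
    rw [div_rpow hx ht.le, rpow_neg ht.le]; ring
  have htrunc : (fun x => max (1 - (x / t) ^ α) 0) =ᵐ[μ]
      (Icc 0 t).indicator fun x => 1 - t ^ (-α) * x ^ α := by
    filter_upwards [hμ] with x hx
    by_cases hxt : x ≤ t
    · rw [indicator_of_mem (show x ∈ Icc 0 t from ⟨hx, hxt⟩), ← hdiv x hx, max_eq_left]
      exact sub_nonneg.2 (rpow_le_one (div_nonneg hx ht.le) ((div_le_one ht).2 hxt) hα.le)
    · rw [indicator_of_notMem fun h : x ∈ Icc 0 t => hxt h.2, max_eq_right]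
      exact sub_nonpos.2 (one_le_rpow ((one_le_div ht).2 (not_le.1 hxt).le) hα.le)
  have hIcc : Icc 0 t =ᵐ[μ] Iic t := by
    rw [eventuallyEq_set]
    filter_upwards [hμ] with x hx using ⟨fun h => h.2, fun h => ⟨hx, h⟩⟩
  rw [integral_congr_ae htrunc, integral_indicator measurableSet_Icc,
    integral_sub (integrable_const 1).integrableOn
      (((continuous_rpow_const hα.le).integrableOn_Icc).const_mul _),
    setIntegral_const, integral_const_mul, measureReal_congr hIcc, smul_eq_mul, mul_one]

theorem integrable_rpow_of_measureReal_Ioi_le {μ : Measure ℝ} [IsFiniteMeasure μ]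
    (hμ : ∀ᵐ x ∂μ, 0 ≤ x) {p q C : ℝ} (hp : 0 < p) (hpq : p < q)
    (htail : ∀ᶠ t in atTop, μ.real (Ioi t) ≤ C * t ^ (-q)) :
    Integrable (fun x => x ^ p) μ := by
  obtain ⟨T, hT_pos, hT⟩ : ∃ T, 0 < T ∧ ∀ t ≥ T, μ.real (Ioi t) ≤ C * t ^ (-q) :=
    ((htail.and (eventually_gt_atTop 0)).exists_forall_of_atTop).imp
      fun T hT => ⟨(hT T le_rfl).2, fun t ht => (hT t ht).1⟩
  refine ⟨(continuous_rpow_const hp.le).measurable.aestronglyMeasurable, ?_⟩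
  rw [hasFiniteIntegral_iff_ofReal (by filter_upwards [hμ] with x hx using rpow_nonneg hx p),
    lintegral_rpow_eq_lintegral_meas_lt_mul μ hμ aemeasurable_id hp,
    ← Ioc_union_Ioi_eq_Ioi hT_pos.le, lintegral_union measurableSet_Ioi Ioc_disjoint_Ioi_same]
  refine ENNReal.mul_lt_top ENNReal.ofReal_lt_top (ENNReal.add_lt_top.2 ⟨?_, ?_⟩)
  · calc ∫⁻ t in Ioc 0 T, μ {x | t < x} * ENNReal.ofReal (t ^ (p - 1))
          ≤ ∫⁻ t in Ioc 0 T, μ univ * ENNReal.ofReal (t ^ (p - 1)) :=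
            lintegral_mono fun t => by gcongr; exact subset_univ _
        _ = μ univ * ∫⁻ t in Ioc 0 T, ENNReal.ofReal (t ^ (p - 1)) :=
            lintegral_const_mul' _ _ (measure_ne_top _ _)
        _ < ⊤ := ENNReal.mul_lt_top (measure_lt_top _ _)
            (intervalIntegral.intervalIntegrable_rpow' (by linarith)).1.lintegral_lt_top
  · calc ∫⁻ t in Ioi T, μ {x | t < x} * ENNReal.ofReal (t ^ (p - 1))
          ≤ ∫⁻ t in Ioi T, ENNReal.ofReal (C * t ^ (p - 1 - q)) := by
            refine setLIntegral_mono_ae' measurableSet_Ioi (Eventually.of_forall fun t ht => ?_)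
            rw [Set.mem_Ioi] at ht
            have ht0 : 0 < t := hT_pos.trans ht
            rw [sub_eq_add_neg (p - 1), rpow_add ht0, ← mul_assoc, mul_right_comm,
              ENNReal.ofReal_mul' (rpow_nonneg ht0.le _)]
            gcongr
            rw [← ofReal_measureReal]
            exact ENNReal.ofReal_le_ofReal (hT t ht.le)
        _ < ⊤ := ((integrableOn_Ioi_rpow_of_lt (by linarith) hT_pos).const_mul C).lintegral_lt_top

/-- if ν((0,∞)) > 0 and x^{2α}(1 − F(x)) → 0 as x → ∞, then the α-moment
m = ∫ x^α ν(dx) is finite and positive and, for every n ≥ 2,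
lim_{x→∞} x^{2α} F̄_n(x) = (1/2) n(n−1) m². -/
theorem kendall_power_tail_light_tail
    (α : ℝ) (hα : 0 < α)
    (ν : Measure ℝ) [IsProbabilityMeasure ν] (hν : ν (Set.Iio 0) = 0)
    (hpos : 0 < ν (Set.Ioi 0))
    (F G H : ℝ → ℝ)
    (hF : ∀ t, F t = (ν (Set.Iic t)).toReal)
    (hG : ∀ t, 0 < t → G t = ∫ x, max (1 - (x / t) ^ α) 0 ∂ν)
    (hH : ∀ t, 0 < t → H t = ∫ x in Set.Icc 0 t, x ^ α ∂ν)
    (htail : Tendsto (fun x => x ^ (2 * α) * (1 - F x)) atTop (𝓝 0))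
    (n : ℕ) (hn : 2 ≤ n)
    (Fn : ℝ → ℝ)
    (hFn : ∀ t, 0 < t → Fn t = (G t) ^ (n - 1) * ((n : ℝ) * t ^ (-α) * H t + G t)) :
    Integrable (fun x => x ^ α) ν ∧ 0 < ∫ x, x ^ α ∂ν ∧
    Tendsto (fun x => x ^ (2 * α) * (1 - Fn x)) atTop
      (𝓝 ((n : ℝ) * ((n : ℝ) - 1) / 2 * (∫ x, x ^ α ∂ν) ^ 2)) := by
  have hnn : ∀ᵐ x ∂ν, 0 ≤ x := by
    filter_upwards [measure_eq_zero_iff_ae_notMem.1 hν] with x hx using not_lt.1 hx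
  have hF_tail : ∀ t, 1 - F t = ν.real (Ioi t) := fun t => by
    rw [hF, ← compl_Iic, probReal_compl_eq_one_sub measurableSet_Iic, measureReal_def]
  have hsq : ∀ t : ℝ, 0 < t → t ^ (2 * α) = (t ^ α) ^ 2 := fun t ht => by
    rw [mul_comm, rpow_mul ht.le, rpow_two]
  have hInt : Integrable (fun x => x ^ α) ν := by
    refine integrable_rpow_of_measureReal_Ioi_le hnn hα (by linarith : α < 2 * α) (C := 1) ?_
    filter_upwards [htail.eventually_le_const one_pos, eventually_gt_atTop 0] with t h1 ht
    rw [one_mul, rpow_neg ht.le, ← hF_tail, ← one_div, le_div_iff₀' (rpow_pos_of_pos ht _)]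
    exact h1
  refine ⟨hInt, ?_, ?_⟩
  · refine (integral_pos_iff_support_of_nonneg_ae ?_ hInt).2 (hpos.trans_le (measure_mono ?_))
    · filter_upwards [hnn] with x hx using rpow_nonneg hx α
    · exact fun x hx => (rpow_pos_of_pos hx α).ne'
  have hGF : ∀ t, 0 < t → G t = 1 - (1 - F t) - t ^ (-α) * H t := fun t ht => by
    rw [hG t ht, integral_max_one_sub_div_rpow hnn hα ht, hH t ht, hF, measureReal_def]
    ring
  have hlim := tendsto_sq_mul_one_sub_pow_mul_add (u := fun t => t ^ (-α) * H t)
    (tendsto_rpow_atTop hα)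
    (htail.congr' (by filter_upwards [eventually_gt_atTop 0] with t ht; rw [hsq t ht]))
    ((tendsto_setIntegral_Icc_zero_atTop hnn hInt).congr'
      (by
        filter_upwards [eventually_gt_atTop 0] with t ht
        rw [hH t ht, ← mul_assoc, ← rpow_add ht, add_neg_cancel, rpow_zero, one_mul]))
    (by omega : 1 ≤ n)
  refine hlim.congr' ?_
  filter_upwards [eventually_gt_atTop 0] with t ht
  rw [hFn t ht, hGF t ht, hsq t ht]
  ring
end

section
/- Let ν be a probability measure on [0,∞) with finite α-moment m = ∫_{[0,∞)} x^α ν(dx) < ∞. Then for every x > 0, lim_{n→∞} F_n( n^{1/α} x ) = ( 1 + m x^{−α} ) e^{−m x^{−α}}. In particular, the Kendall random walk normalized by n^{1/α} converges in distribution to the law with this cumulative distribution function. -/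
open MeasureTheory Filter Real Topology

/-!
Write `t n = n ^ (1/α) * x`, so that `n = x ^ (-α) * t n ^ α`. Since
`1 - G t = ∫ min ((y / t) ^ α) 1 dν` and `t ^ α * min ((y / t) ^ α) 1 = min (y ^ α) (t ^ α) ≤ y ^ α`,
dominated convergence gives `t ^ α * (1 - G t) → m` as `t → ∞`, hence `n * (G (t n) - 1) → -m x ^ (-α)`, which gives
`G (t n) → 1` and `G (t n) ^ (n - 1) → exp (-m x ^ (-α))`. The second factor of `F_n` is
`x ^ (-α) * H (t n) + G (t n) → m x ^ (-α) + 1`, since the truncated moments increase to `m`.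
-/

noncomputable def williamsonTransform (α : ℝ) (ν : Measure ℝ) (t : ℝ) : ℝ :=
  ∫ x, max (1 - (x / t) ^ α) 0 ∂ν

lemma max_one_sub_zero_eq_one_sub_min (u : ℝ) : max (1 - u) 0 = 1 - min u 1 := by
  rcases le_total u 1 with h | h
  · rw [max_eq_left (by linarith), min_eq_left h]
  · rw [max_eq_right (by linarith), min_eq_right h, sub_self]

lemma integral_max_one_sub_zero {X : Type*} [MeasurableSpace X] {ν : Measure X}
    [IsProbabilityMeasure ν] {u : X → ℝ} (hu : AEStronglyMeasurable u ν) (hu0 : 0 ≤ᵐ[ν] u) :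
    ∫ y, max (1 - u y) 0 ∂ν = 1 - ∫ y, min (u y) 1 ∂ν := by
  have hint : Integrable (fun y => min (u y) 1) ν := by
    refine .of_bound (hu.inf aestronglyMeasurable_const) 1 ?_
    filter_upwards [hu0] with y hy
    rw [norm_of_nonneg (le_min hy zero_le_one)]
    exact min_le_right _ _
  simp_rw [max_one_sub_zero_eq_one_sub_min]
  rw [integral_sub (integrable_const 1) hint, integral_const, probReal_univ, one_smul]

lemma rpow_mul_min_div_rpow_one {y s : ℝ} (α : ℝ) (hy : 0 ≤ y) (hs : 0 < s) :
    s ^ α * min ((y / s) ^ α) 1 = min (y ^ α) (s ^ α) := by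
  rw [mul_min_of_nonneg _ _ (rpow_nonneg hs.le α), div_rpow hy hs.le,
    mul_div_cancel₀ _ (rpow_pos_of_pos hs α).ne', mul_one]

lemma tendsto_rpow_mul_integral_min_div_rpow {α : ℝ} (hα : 0 < α) {ν : Measure ℝ}
    (hν : ∀ᵐ y ∂ν, 0 ≤ y) (hmo : Integrable (fun y => y ^ α) ν) :
    Tendsto (fun s => s ^ α * ∫ y, min ((y / s) ^ α) 1 ∂ν) atTop (𝓝 (∫ y, y ^ α ∂ν)) := by
  have hmin : ∀ᶠ s in atTop,
      ∫ y, min (y ^ α) (s ^ α) ∂ν = s ^ α * ∫ y, min ((y / s) ^ α) 1 ∂ν := by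
    filter_upwards [eventually_gt_atTop 0] with s hs
    rw [← integral_const_mul]
    refine integral_congr_ae ?_
    filter_upwards [hν] with y hy
    exact (rpow_mul_min_div_rpow_one α hy hs).symm
  refine Tendsto.congr' hmin ?_
  refine tendsto_integral_filter_of_dominated_convergence (fun y => y ^ α)
    (.of_forall fun _ => hmo.aestronglyMeasurable.inf aestronglyMeasurable_const) ?_ hmo ?_
  · filter_upwards [eventually_gt_atTop 0] with s hs
    filter_upwards [hν] with y hy
    rw [norm_of_nonneg (le_min (rpow_nonneg hy α) (rpow_nonneg hs.le α))]
    exact min_le_left _ _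
  · filter_upwards with y
    refine tendsto_const_nhds.congr' ?_
    filter_upwards [(tendsto_rpow_atTop hα).eventually_ge_atTop (y ^ α)] with s hs
    exact (min_eq_left hs).symm

lemma tendsto_rpow_mul_one_sub_williamsonTransform {α : ℝ} (hα : 0 < α) {ν : Measure ℝ}
    [IsProbabilityMeasure ν] (hν : ∀ᵐ y ∂ν, 0 ≤ y) (hmo : Integrable (fun y => y ^ α) ν) :
    Tendsto (fun t => t ^ α * (1 - williamsonTransform α ν t)) atTop
      (𝓝 (∫ y, y ^ α ∂ν)) := by
  refine (tendsto_rpow_mul_integral_min_div_rpow hα hν hmo).congr' ?_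
  filter_upwards [eventually_gt_atTop 0] with t ht
  have hu : AEStronglyMeasurable (fun y : ℝ => (y / t) ^ α) ν :=
    (measurable_id.div_const t).pow_const α |>.aestronglyMeasurable
  have hu0 : 0 ≤ᵐ[ν] fun y => (y / t) ^ α := by
    filter_upwards [hν] with y hy
    exact rpow_nonneg (div_nonneg hy ht.le) α
  rw [williamsonTransform, integral_max_one_sub_zero hu hu0, sub_sub_cancel]

lemma tendsto_setIntegral_Icc_zero_atTop_s13 {ν : Measure ℝ} (hν : ∀ᵐ y ∂ν, 0 ≤ y) {f : ℝ → ℝ}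
    (hf : Integrable f ν) :
    Tendsto (fun t => ∫ y in Set.Icc 0 t, f y ∂ν) atTop (𝓝 (∫ y, f y ∂ν)) := by
  have h := tendsto_setIntegral_of_monotone (s := fun t => Set.Icc (0 : ℝ) t)
    (fun _ => measurableSet_Icc) (fun _ _ hst => Set.Icc_subset_Icc_right hst) hf.integrableOn
  rwa [Set.iUnion_Icc_right, Measure.restrict_eq_self_of_ae_mem (s := Set.Ici 0) hν] at h

lemma tendsto_one_of_tendsto_natCast_mul_sub_one {b : ℕ → ℝ} {c : ℝ}
    (hb : Tendsto (fun n : ℕ => n * (b n - 1)) atTop (𝓝 c)) :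
    Tendsto b atTop (𝓝 1) := by
  have h := (hb.mul (tendsto_inv_atTop_zero.comp tendsto_natCast_atTop_atTop)).const_add 1
  rw [mul_zero, add_zero] at h
  refine h.congr' ?_
  filter_upwards [eventually_ne_atTop 0] with n hn
  simp [field]

lemma tendsto_pow_pred_of_tendsto_natCast_mul_sub_one {b : ℕ → ℝ} {c : ℝ}
    (hb : Tendsto (fun n : ℕ => n * (b n - 1)) atTop (𝓝 c)) :
    Tendsto (fun n => b n ^ (n - 1)) atTop (𝓝 (exp c)) := by
  have hpow := Real.tendsto_one_add_pow_exp_of_tendsto (g := fun n => b n - 1) hb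
  have h := hpow.div (tendsto_one_of_tendsto_natCast_mul_sub_one hb) one_ne_zero
  rw [div_one] at h
  refine h.congr' ?_
  filter_upwards [eventually_ne_atTop 0,
    (tendsto_one_of_tendsto_natCast_mul_sub_one hb).eventually_ne one_ne_zero] with n hn hbn
  rw [Pi.div_apply, add_sub_cancel, pow_sub₀ _ hbn (Nat.one_le_iff_ne_zero.2 hn), pow_one,
    div_eq_mul_inv]

lemma rpow_inv_mul_rpow {α : ℝ} (hα : α ≠ 0) {a x : ℝ} (ha : 0 ≤ a) (hx : 0 ≤ x) :
    (a ^ α⁻¹ * x) ^ α = a * x ^ α := by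
  rw [mul_rpow (rpow_nonneg ha _) hx, ← rpow_mul ha, inv_mul_cancel₀ hα, rpow_one]

/-- if the α-moment m = ∫ x^α ν(dx) is finite, then for every x > 0,
F_n( n^{1/α} x ) → ( 1 + m x^{−α} ) e^{−m x^{−α}} as n → ∞; i.e. the Kendall random walk
normalized by n^{1/α} converges in distribution to the law with this cdf. -/
theorem kendall_clt_finite_moment
    (α : ℝ) (hα : 0 < α)
    (ν : Measure ℝ) [IsProbabilityMeasure ν] (hν : ν (Set.Iio 0) = 0)
    (G H : ℝ → ℝ)
    (hG : ∀ t, 0 < t → G t = ∫ x, max (1 - (x / t) ^ α) 0 ∂ν)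
    (hH : ∀ t, 0 < t → H t = ∫ x in Set.Icc 0 t, x ^ α ∂ν)
    (hmo : Integrable (fun x => x ^ α) ν)
    (Fn : ℕ → ℝ → ℝ)
    (hFn : ∀ (n : ℕ) (t : ℝ), 0 < t →
      Fn n t = (G t) ^ (n - 1) * ((n : ℝ) * t ^ (-α) * H t + G t)) :
    ∀ x, 0 < x →
      Tendsto (fun n : ℕ => Fn n ((n : ℝ) ^ (α⁻¹) * x)) atTop
        (𝓝 ((1 + (∫ y, y ^ α ∂ν) * x ^ (-α)) * Real.exp (-(∫ y, y ^ α ∂ν) * x ^ (-α)))) := by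
  intro x hx
  set m := ∫ y, y ^ α ∂ν
  have hν0 : ∀ᵐ y ∂ν, 0 ≤ y := by
    simp only [ae_iff, not_le]
    exact hν
  set t : ℕ → ℝ := fun n => (n : ℝ) ^ α⁻¹ * x
  have ht_atTop : Tendsto t atTop atTop :=
    ((tendsto_rpow_atTop (inv_pos.2 hα)).comp tendsto_natCast_atTop_atTop).atTop_mul_const hx
  have ht_pos : ∀ᶠ n in atTop, 0 < t n := ht_atTop.eventually_gt_atTop 0
  have ht_rpow (n : ℕ) : t n ^ α = n * x ^ α := rpow_inv_mul_rpow hα.ne' n.cast_nonneg hx.le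
  have hG_lim : Tendsto (fun n : ℕ => n * (G (t n) - 1)) atTop (𝓝 (-x ^ (-α) * m)) := by
    refine (((tendsto_rpow_mul_one_sub_williamsonTransform hα hν0 hmo).comp ht_atTop).const_mul
      (-x ^ (-α))).congr' ?_
    filter_upwards [ht_pos] with n hn
    rw [Function.comp_apply, williamsonTransform, ← hG _ hn, ht_rpow, rpow_neg hx.le]
    field_simp
    ring
  have hH_lim : Tendsto (fun n => H (t n)) atTop (𝓝 m) := by
    refine ((tendsto_setIntegral_Icc_zero_atTop_s13 hν0 hmo).comp ht_atTop).congr' ?_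
    filter_upwards [ht_pos] with n hn using (hH _ hn).symm
  have hlim := (tendsto_pow_pred_of_tendsto_natCast_mul_sub_one hG_lim).mul
    ((hH_lim.const_mul (x ^ (-α))).add (tendsto_one_of_tendsto_natCast_mul_sub_one hG_lim))
  convert hlim.congr' ?_ using 2
  · ring_nf
  · filter_upwards [ht_pos, eventually_ne_atTop 0] with n hn hn0
    rw [hFn _ _ hn, rpow_neg hn.le, ht_rpow, rpow_neg hx.le]
    field_simp
end

section
/- Fix m > 0 and let ρ be the measure on (0,∞) with density α m² x^{−2α−1} e^{−m x^{−α}} with respect to Lebesgue measure. Then ρ is a probability measure, its cumulative distribution function is F_ρ(x) = ( 1 + m x^{−α} ) e^{−m x^{−α}} for x > 0, its Williamson transform is G_ρ(t) = e^{−m t^{−α}} for t > 0, and its truncated α-moment is H_ρ(t) = m e^{−m t^{−α}} for t > 0. -/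
/-!
Put `u = m x^{-α}`. The function `(1 + u) e^{-u}` has derivative (in `x`) equal to the density
of `ρ`, and `m e^{-u}` has derivative `x^α` times the density; both vanish as `x → 0⁺`, so the
fundamental theorem of calculus on `(0, t]` gives the distribution function and the truncated
`α`-moment, and since `(1 + u) e^{-u} → 1` as `x → ∞`, `ρ` has total mass one. Finally, for
every law on `[0, ∞)` the Williamson transform is `G(t) = F(t) - t^{-α} H(t)`, which here
equals `e^{-m t^{-α}}`.
-/

open MeasureTheory Filter Set Real Topology

theorem integrableOn_Ioc_and_integral_eq_of_hasDerivAt_of_tendsto {g g' : ℝ → ℝ} {a b l : ℝ}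
    (hab : a < b) (hderiv : ∀ x ∈ Ioc a b, HasDerivAt g (g' x) x)
    (hpos : ∀ x ∈ Ioo a b, 0 ≤ g' x) (hlim : Tendsto g (𝓝[>] a) (𝓝 l)) :
    IntegrableOn g' (Ioc a b) ∧ ∫ x in Ioc a b, g' x = g b - l := by
  classical
  set G := Function.update g a l with hG
  have hGderiv : ∀ x ∈ Ioo a b, HasDerivAt G (g' x) x := fun x hx =>
    (hderiv x (Ioo_subset_Ioc_self hx)).congr_of_eventuallyEq <| by
      filter_upwards [Ioi_mem_nhds hx.1] with y hy using Function.update_of_ne hy.ne' _ _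
  have hGcont : ContinuousOn G (Icc a b) := by
    rw [continuousOn_update_iff, Icc_sdiff_left]
    exact ⟨fun x hx => (hderiv x hx).continuousAt.continuousWithinAt,
      fun _ => hlim.mono_left (nhdsWithin_mono _ Ioc_subset_Ioi_self)⟩
  have hint := intervalIntegral.integrableOn_deriv_of_nonneg hGcont hGderiv hpos
  refine ⟨hint, ?_⟩
  have hFTC := intervalIntegral.integral_eq_sub_of_hasDerivAt_of_le hab.le hGcont hGderiv
    ((intervalIntegrable_iff_integrableOn_Ioc_of_le hab.le).2 hint)
  rwa [intervalIntegral.integral_of_le hab.le, hG, Function.update_self,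
    Function.update_of_ne hab.ne'] at hFTC

theorem integral_max_one_sub_div_rpow_eq {μ : Measure ℝ} [IsFiniteMeasure μ]
    (hμ : μ (Iio 0) = 0) {α t : ℝ} (hα : 0 < α) (ht : 0 < t) :
    ∫ x, max (1 - (x / t) ^ α) 0 ∂μ =
      μ.real (Iic t) - t ^ (-α) * ∫ x in Icc 0 t, x ^ α ∂μ := by
  have hnonneg : ∀ᵐ x ∂μ, 0 ≤ x :=
    ae_iff.2 <| by simp only [not_le]; exact hμ
  have htrunc : (fun x => max (1 - (x / t) ^ α) 0)
      =ᵐ[μ] (Icc 0 t).indicator fun x => 1 - t ^ (-α) * x ^ α := by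
    filter_upwards [hnonneg] with x hx
    by_cases hxt : x ≤ t
    · have hle : (x / t) ^ α ≤ 1 := rpow_le_one (by positivity) ((div_le_one ht).2 hxt) hα.le
      rw [indicator_of_mem (show x ∈ Icc 0 t from ⟨hx, hxt⟩), max_eq_left (by linarith),
        div_rpow hx ht.le, rpow_neg ht.le, div_eq_inv_mul]
    · have hge : 1 ≤ (x / t) ^ α :=
        one_le_rpow ((one_le_div ht).2 (not_le.1 hxt).le) hα.le
      rw [indicator_of_notMem (fun h => hxt h.2), max_eq_right (by linarith)]
  have hint : IntegrableOn (fun x => x ^ α) (Icc 0 t) μ :=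
    (continuous_rpow_const hα.le).integrableOn_Icc
  have hIic : μ.real (Iic t) = μ.real (Icc 0 t) := by
    rw [← Iio_union_Icc_eq_Iic ht.le]
    exact measureReal_congr (union_ae_eq_right.2 (measure_mono_null sdiff_subset hμ))
  rw [integral_congr_ae htrunc, integral_indicator measurableSet_Icc,
    integral_sub (integrable_const 1) (hint.const_mul _), setIntegral_const,
    integral_const_mul, smul_eq_mul, mul_one, hIic]

noncomputable section KendallStableLaw

variable {α m x t : ℝ}

def kendallDensity (α m x : ℝ) : ℝ := α * m ^ 2 * x ^ (-2 * α - 1) * exp (-m * x ^ (-α))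

def kendallCDF (α m x : ℝ) : ℝ := (1 + m * x ^ (-α)) * exp (-m * x ^ (-α))

def kendallLaw (α m : ℝ) : Measure ℝ :=
  (volume.restrict (Ioi 0)).withDensity fun x => ENNReal.ofReal (kendallDensity α m x)

theorem kendallDensity_nonneg (hα : 0 ≤ α) (hx : 0 ≤ x) : 0 ≤ kendallDensity α m x := by
  unfold kendallDensity
  have := rpow_nonneg hx (-2 * α - 1)
  positivity

theorem kendallCDF_nonneg (hm : 0 ≤ m) (hx : 0 ≤ x) : 0 ≤ kendallCDF α m x := by
  unfold kendallCDF
  have := rpow_nonneg hx (-α)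
  positivity

theorem hasDerivAt_exp_neg_mul_rpow_neg (hx : 0 < x) :
    HasDerivAt (fun y => exp (-m * y ^ (-α)))
      (α * m * x ^ (-α - 1) * exp (-m * x ^ (-α))) x := by
  refine ((hasDerivAt_rpow_const (p := -α) (Or.inl hx.ne')).const_mul (-m)).exp.congr_deriv ?_
  ring

theorem hasDerivAt_kendallCDF (hx : 0 < x) :
    HasDerivAt (kendallCDF α m) (kendallDensity α m x) x := by
  refine ((((hasDerivAt_rpow_const (p := -α) (Or.inl hx.ne')).const_mul m).const_add 1).fun_mul
    (hasDerivAt_exp_neg_mul_rpow_neg hx)).congr_deriv ?_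
  rw [kendallDensity, show -2 * α - 1 = -α + (-α - 1) by ring, rpow_add hx]
  ring

theorem hasDerivAt_mul_exp_neg_mul_rpow_neg (hx : 0 < x) :
    HasDerivAt (fun y => m * exp (-m * y ^ (-α))) (x ^ α * kendallDensity α m x) x := by
  refine ((hasDerivAt_exp_neg_mul_rpow_neg hx).const_mul m).congr_deriv ?_
  rw [kendallDensity, show -2 * α - 1 = -α + (-α - 1) by ring, rpow_add hx, rpow_neg hx.le]
  field_simp

theorem tendsto_mul_rpow_neg_nhdsGT_zero (hα : 0 < α) (hm : 0 < m) :
    Tendsto (fun x => m * x ^ (-α)) (𝓝[>] 0) atTop :=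
  (tendsto_rpow_neg_nhdsGT_zero (neg_lt_zero.2 hα)).const_mul_atTop hm

theorem tendsto_one_add_mul_exp_neg_atTop :
    Tendsto (fun u => (1 + u) * exp (-u)) atTop (𝓝 0) := by
  have h := tendsto_exp_neg_atTop_nhds_zero.add
    (by simpa using tendsto_pow_mul_exp_neg_atTop_nhds_zero 1)
  simpa only [add_zero, add_mul, one_mul] using h

theorem tendsto_kendallCDF_nhdsGT_zero (hα : 0 < α) (hm : 0 < m) :
    Tendsto (kendallCDF α m) (𝓝[>] 0) (𝓝 0) := by
  show Tendsto (fun x => (1 + m * x ^ (-α)) * exp (-m * x ^ (-α))) _ _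
  simpa only [Function.comp_def, neg_mul] using
    tendsto_one_add_mul_exp_neg_atTop.comp (tendsto_mul_rpow_neg_nhdsGT_zero hα hm)

theorem tendsto_kendallCDF_atTop (hα : 0 < α) : Tendsto (kendallCDF α m) atTop (𝓝 1) := by
  show Tendsto (fun x => (1 + m * x ^ (-α)) * exp (-m * x ^ (-α))) _ _
  have h0 : Tendsto (fun x => m * x ^ (-α)) atTop (𝓝 0) := by
    simpa using (tendsto_rpow_neg_atTop hα).const_mul m
  have h1 : Tendsto (fun x => -(m * x ^ (-α))) atTop (𝓝 0) := by simpa using h0.neg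
  simpa [neg_mul] using (tendsto_const_nhds.add h0).mul ((continuous_exp.tendsto 0).comp h1)

theorem tendsto_mul_exp_neg_mul_rpow_neg_nhdsGT_zero (hα : 0 < α) (hm : 0 < m) :
    Tendsto (fun x => m * exp (-m * x ^ (-α))) (𝓝[>] 0) (𝓝 0) := by
  simpa only [Function.comp_def, neg_mul, mul_zero] using
    (tendsto_exp_neg_atTop_nhds_zero.comp (tendsto_mul_rpow_neg_nhdsGT_zero hα hm)).const_mul m

theorem integrableOn_kendallDensity_and_integral_eq (hα : 0 < α) (hm : 0 < m) (ht : 0 < t) :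
    IntegrableOn (kendallDensity α m) (Ioc 0 t) ∧
      ∫ x in Ioc 0 t, kendallDensity α m x = kendallCDF α m t := by
  simpa only [sub_zero] using integrableOn_Ioc_and_integral_eq_of_hasDerivAt_of_tendsto ht
    (fun x hx => hasDerivAt_kendallCDF hx.1)
    (fun x hx => kendallDensity_nonneg hα.le hx.1.le) (tendsto_kendallCDF_nhdsGT_zero hα hm)

theorem integral_rpow_mul_kendallDensity (hα : 0 < α) (hm : 0 < m) (ht : 0 < t) :
    ∫ x in Ioc 0 t, x ^ α * kendallDensity α m x = m * exp (-m * t ^ (-α)) := by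
  simpa only [sub_zero] using (integrableOn_Ioc_and_integral_eq_of_hasDerivAt_of_tendsto ht
    (fun x hx => hasDerivAt_mul_exp_neg_mul_rpow_neg hx.1)
    (fun x hx => mul_nonneg (rpow_nonneg hx.1.le α) (kendallDensity_nonneg hα.le hx.1.le))
    (tendsto_mul_exp_neg_mul_rpow_neg_nhdsGT_zero hα hm)).2

theorem kendallLaw_Iic (hα : 0 < α) (hm : 0 < m) (hx : 0 < x) :
    kendallLaw α m (Iic x) = ENNReal.ofReal (kendallCDF α m x) := by
  obtain ⟨hint, hintegral⟩ := integrableOn_kendallDensity_and_integral_eq hα hm hx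
  rw [kendallLaw, withDensity_apply _ measurableSet_Iic,
    Measure.restrict_restrict measurableSet_Iic, Iic_inter_Ioi, ← hintegral,
    ofReal_integral_eq_lintegral_ofReal hint]
  exact (ae_restrict_iff' measurableSet_Ioc).2
    (.of_forall fun y hy => kendallDensity_nonneg hα.le hy.1.le)

theorem kendallLaw_real_Iic (hα : 0 < α) (hm : 0 < m) (hx : 0 < x) :
    (kendallLaw α m).real (Iic x) = kendallCDF α m x := by
  rw [measureReal_def, kendallLaw_Iic hα hm hx,
    ENNReal.toReal_ofReal (kendallCDF_nonneg hm.le hx.le)]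

theorem kendallLaw_Iio_zero : kendallLaw α m (Iio 0) = 0 :=
  withDensity_absolutelyContinuous _ _ <| by
    rw [Measure.restrict_apply measurableSet_Iio, Iio_inter_Ioi, Ioo_self, measure_empty]

theorem isProbabilityMeasure_kendallLaw (hα : 0 < α) (hm : 0 < m) :
    IsProbabilityMeasure (kendallLaw α m) := by
  refine ⟨tendsto_nhds_unique (tendsto_measure_Iic_atTop _) ?_⟩
  have h := (ENNReal.continuous_ofReal.tendsto 1).comp (tendsto_kendallCDF_atTop (m := m) hα)
  rw [ENNReal.ofReal_one] at h
  refine h.congr' ?_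
  filter_upwards [eventually_gt_atTop 0] with x hx using (kendallLaw_Iic hα hm hx).symm

theorem setIntegral_Icc_rpow_kendallLaw (hα : 0 < α) (hm : 0 < m) (ht : 0 < t) :
    ∫ x in Icc 0 t, x ^ α ∂kendallLaw α m = m * exp (-m * t ^ (-α)) := by
  rw [kendallLaw, setIntegral_withDensity_eq_setIntegral_toReal_smul
      (by unfold kendallDensity; fun_prop) (.of_forall fun _ => ENNReal.ofReal_lt_top) _
      measurableSet_Icc, Measure.restrict_restrict measurableSet_Icc,
    show Icc 0 t ∩ Ioi 0 = Ioc 0 t by grind, ← integral_rpow_mul_kendallDensity hα hm ht]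
  refine setIntegral_congr_fun measurableSet_Ioc fun x hx => ?_
  rw [ENNReal.toReal_ofReal (kendallDensity_nonneg hα.le hx.1.le), smul_eq_mul, mul_comm]

end KendallStableLaw

/-- the Kendall-stable law ρ with density α m² x^{−2α−1} e^{−m x^{−α}} on
(0,∞) is a probability measure with cdf (1 + m x^{−α}) e^{−m x^{−α}}, Williamson transform
e^{−m t^{−α}} and truncated α-moment m e^{−m t^{−α}}. -/
theorem kendall_stable_law_properties
    (α m : ℝ) (hα : 0 < α) (hm : 0 < m)
    (ρ : Measure ℝ)
    (hρ : ρ = (volume.restrict (Set.Ioi 0)).withDensity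
      fun x => ENNReal.ofReal (α * m ^ 2 * x ^ (-2 * α - 1) * Real.exp (-m * x ^ (-α)))) :
    IsProbabilityMeasure ρ ∧
    (∀ x, 0 < x → (ρ (Set.Iic x)).toReal = (1 + m * x ^ (-α)) * Real.exp (-m * x ^ (-α))) ∧
    (∀ t, 0 < t → ∫ x, max (1 - (x / t) ^ α) 0 ∂ρ = Real.exp (-m * t ^ (-α))) ∧
    (∀ t, 0 < t → ∫ x in Set.Icc 0 t, x ^ α ∂ρ = m * Real.exp (-m * t ^ (-α))) := by
  obtain rfl : ρ = kendallLaw α m := hρ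
  have hprob := isProbabilityMeasure_kendallLaw hα hm
  refine ⟨hprob, fun x hx => kendallLaw_real_Iic hα hm hx, fun t ht => ?_,
    fun t ht => setIntegral_Icc_rpow_kendallLaw hα hm ht⟩
  rw [integral_max_one_sub_div_rpow_eq kendallLaw_Iio_zero hα ht, kendallLaw_real_Iic hα hm ht,
    setIntegral_Icc_rpow_kendallLaw hα hm ht, kendallCDF]
  ring
end
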